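/- For all integers 1 ≤ m < n with f(n) ≥ 2, the number of vertices of X_n exceeds (f(n)−1) times the number of vertices of Y_m; that is, (2^{2^{2n}}·f(n)+1)·f(n) > (f(n)−1)·(2^{2^{2m+1}}·f(m)+1)·f(m). Consequently, for every wiring g of X_n into Y_m, some vertex of Y_m has at least f(n) preimages under g, so X_n admits no coarse (f(n)−1)-wiring into Y_m. -/

import Mathlib

/-! `X_n` has `f n * (2 ^ 2 ^ (2n) * f n + 1)` vertices, while `Y_m` has
`f m * (2 ^ 2 ^ (2m+1) * f m + 1)`. Since `f m ≤ m < n`, the doubly exponential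
growth gives `(2 ^ 2 ^ (2m+1) * f m + 1) * f m ≤ 2 ^ 2 ^ (2n)`, so `X_n` has more than
`f n - 1` times as many vertices as `Y_m`, and the pigeonhole principle yields a fiber of
size at least `f n`. -/

open SimpleGraph

/-- A wiring of `G` into `H`: a map on vertices together with, for each edge
(given by an ordered adjacent pair, compatibly with reversal), a walk in `H`
joining the images of the endpoints. -/
structure Wiring {V : Type*} {W : Type*} (G : SimpleGraph V) (H : SimpleGraph W) where
  toFun : V → W
  walk : ∀ u v : V, G.Adj u v → H.Walk (toFun u) (toFun v)
  walk_symm : ∀ (u v : V) (h : G.Adj u v), walk v u (h.symm) = (walk u v h).reverse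

namespace Wiring

variable {V : Type*} {W : Type*} {G : SimpleGraph V} {H : SimpleGraph W}

/-- A wiring is a coarse `k`-wiring if the vertex map is at most `k`-to-one and
every edge of `H` lies on at most `k` of the chosen walks.  (Since walks are
indexed by *ordered* adjacent pairs, with the walk of `(v,u)` the reverse of the
walk of `(u,v)`, each edge of `G` is counted twice; hence the bound `2 * k`.) -/
def IsCoarse (Wr : Wiring G H) (k : ℕ) : Prop :=
  (∀ w : W, {v : V | Wr.toFun v = w}.ncard ≤ k) ∧
  (∀ e : Sym2 W, e ∈ H.edgeSet →
    {p : V × V | ∃ h : G.Adj p.1 p.2, e ∈ (Wr.walk p.1 p.2 h).edges}.ncard ≤ 2 * k)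

/-- The vertices of the image of a wiring. -/
def imageVerts (Wr : Wiring G H) : Set W :=
  Set.range Wr.toFun ∪ {w : W | ∃ (u v : V) (h : G.Adj u v), w ∈ (Wr.walk u v h).support}

/-- The volume of a wiring: the number of vertices of its image. -/
noncomputable def volume (Wr : Wiring G H) : ℕ := Wr.imageVerts.ncard

/-- The image of a wiring, as a subgraph of the target. -/
def imageSubgraph (Wr : Wiring G H) : H.Subgraph where
  verts := Wr.imageVerts
  Adj w w' := ∃ (u v : V) (h : G.Adj u v), (Wr.walk u v h).toSubgraph.Adj w w'
  adj_sub := by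
    rintro a b ⟨u, v, h, ha⟩
    exact (Wr.walk u v h).toSubgraph.adj_sub ha
  edge_vert := by
    rintro a b ⟨u, v, h, ha⟩
    refine Or.inr ⟨u, v, h, ?_⟩
    have := (Wr.walk u v h).toSubgraph.edge_vert ha
    rwa [SimpleGraph.Walk.verts_toSubgraph] at this
  symm := by
    constructor
    rintro a b ⟨u, v, h, ha⟩
    exact ⟨u, v, h, ha.symm⟩

end Wiring

/-- `wir k G H` : the minimal volume of a coarse `k`-wiring of `G` into `H`
(`⊤` if there is none). -/
noncomputable def wir {V : Type*} {W : Type*} (k : ℕ)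
    (G : SimpleGraph V) (H : SimpleGraph W) : ℕ∞ :=
  sInf {N : ℕ∞ | ∃ Wr : Wiring G H, Wr.IsCoarse k ∧ N = (Wr.volume : ℕ∞)}

/-- The `k`-wiring profile of `X` into `H`. -/
noncomputable def wirProfile {V : Type*} {W : Type*}
    (X : SimpleGraph V) (H : SimpleGraph W) (k n : ℕ) : ℕ∞ :=
  sSup {N : ℕ∞ | ∃ Γ : X.Subgraph, Γ.verts.Finite ∧ Γ.verts.ncard ≤ n ∧ N = wir k Γ.coe H}

/-- One-directional adjacency generating the 2-dimensional integer grid. -/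
def gridStep (p q : ℤ × ℤ) : Prop :=
  (p.1 = q.1 ∧ q.2 = p.2 + 1) ∨ (p.2 = q.2 ∧ q.1 = p.1 + 1)

/-- The 2-dimensional integer grid: vertices `ℤ²`, edges between points at distance 1. -/
def grid : SimpleGraph (ℤ × ℤ) where
  Adj p q := p ≠ q ∧ (gridStep p q ∨ gridStep q p)
  symm := ⟨fun p q h => ⟨h.1.symm, h.2.symm⟩⟩
  loopless := ⟨fun p h => h.1 rfl⟩

/-- One-directional adjacency for the column graphs: vertical steps everywhere,
horizontal steps at heights divisible by `t`. -/
def colStep (t : ℕ) (p q : ℕ × ℕ) : Prop :=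
  (p.1 = q.1 ∧ q.2 = p.2 + 1) ∨ (p.2 = q.2 ∧ t ∣ p.2 ∧ q.1 = p.1 + 1)

/-- Vertices of `X_n`. -/
def XVert (f : ℕ → ℕ) (n : ℕ) : Type :=
  {p : ℕ × ℕ // p.1 < f n ∧ p.2 ≤ 2 ^ 2 ^ (2 * n) * f n}

/-- The graph `X_n`. -/
def Xgraph (f : ℕ → ℕ) (n : ℕ) : SimpleGraph (XVert f n) where
  Adj u v := u ≠ v ∧ (colStep (2 ^ 2 ^ (2 * n)) u.val v.val ∨ colStep (2 ^ 2 ^ (2 * n)) v.val u.val)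
  symm := ⟨fun u v h => ⟨h.1.symm, h.2.symm⟩⟩
  loopless := ⟨fun u h => h.1 rfl⟩

/-- Vertices of `Y_n`. -/
def YVert (f : ℕ → ℕ) (n : ℕ) : Type :=
  {p : ℕ × ℕ // p.1 < f n ∧ p.2 ≤ 2 ^ 2 ^ (2 * n + 1) * f n}

/-- The graph `Y_n`. -/
def Ygraph (f : ℕ → ℕ) (n : ℕ) : SimpleGraph (YVert f n) where
  Adj u v := u ≠ v ∧
    (colStep (2 ^ 2 ^ (2 * n + 1)) u.val v.val ∨ colStep (2 ^ 2 ^ (2 * n + 1)) v.val u.val)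
  symm := ⟨fun u v h => ⟨h.1.symm, h.2.symm⟩⟩
  loopless := ⟨fun u h => h.1 rfl⟩

/-- Vertices of `X = ⨆ (n ≥ 1) X_n`: triples `(n, i, j)` with `(i,j)` a vertex of `X_n`. -/
def XTVert (f : ℕ → ℕ) : Type :=
  {p : ℕ × ℕ × ℕ // 1 ≤ p.1 ∧ p.2.1 < f p.1 ∧ p.2.2 ≤ 2 ^ 2 ^ (2 * p.1) * f p.1}

/-- The graph `X`, the disjoint union of the `X_n` for `n ≥ 1`. -/
def Xtotal (f : ℕ → ℕ) : SimpleGraph (XTVert f) where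
  Adj u v := u ≠ v ∧ u.val.1 = v.val.1 ∧
    (colStep (2 ^ 2 ^ (2 * u.val.1)) u.val.2 v.val.2 ∨
     colStep (2 ^ 2 ^ (2 * u.val.1)) v.val.2 u.val.2)
  symm := ⟨fun u v h => ⟨h.1.symm, h.2.1.symm, by rw [← h.2.1]; exact h.2.2.symm⟩⟩
  loopless := ⟨fun u h => h.1 rfl⟩

/-- Vertices of `Y = ⨆ (n ≥ 1) Y_n`. -/
def YTVert (f : ℕ → ℕ) : Type :=
  {p : ℕ × ℕ × ℕ // 1 ≤ p.1 ∧ p.2.1 < f p.1 ∧ p.2.2 ≤ 2 ^ 2 ^ (2 * p.1 + 1) * f p.1}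

/-- The graph `Y`, the disjoint union of the `Y_n` for `n ≥ 1`. -/
def Ytotal (f : ℕ → ℕ) : SimpleGraph (YTVert f) where
  Adj u v := u ≠ v ∧ u.val.1 = v.val.1 ∧
    (colStep (2 ^ 2 ^ (2 * u.val.1 + 1)) u.val.2 v.val.2 ∨
     colStep (2 ^ 2 ^ (2 * u.val.1 + 1)) v.val.2 u.val.2)
  symm := ⟨fun u v h => ⟨h.1.symm, h.2.1.symm, by rw [← h.2.1]; exact h.2.2.symm⟩⟩
  loopless := ⟨fun u h => h.1 rfl⟩

theorem two_pow_two_pow_mul_add_one_mul_le {m n B : ℕ} (hmn : m < n) (hB : B ≤ m) :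
    (2 ^ 2 ^ (2 * m + 1) * B + 1) * B ≤ 2 ^ 2 ^ (2 * n) := by
  set c := 2 ^ (2 * m + 1) with hc
  have hBm : B + 1 ≤ 2 ^ m := lt_of_le_of_lt hB Nat.lt_two_pow_self
  have hc_pos : 1 ≤ 2 ^ c := Nat.one_le_two_pow
  have hexp : c + m + m ≤ 2 ^ (2 * n) := by
    have hmc : 2 * m + 1 < c := Nat.lt_two_pow_self
    have hcc : c + c ≤ 2 ^ (2 * n) :=
      calc c + c = 2 ^ (2 * m + 2) := by rw [hc]; ring
        _ ≤ 2 ^ (2 * n) := Nat.pow_le_pow_right two_pos (by omega)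
    omega
  calc (2 ^ c * B + 1) * B ≤ (2 ^ c * 2 ^ m) * 2 ^ m :=
        Nat.mul_le_mul (by nlinarith [Nat.mul_le_mul_left (2 ^ c) hBm]) (by omega)
    _ = 2 ^ (c + m + m) := by ring
    _ ≤ 2 ^ 2 ^ (2 * n) := Nat.pow_le_pow_right two_pos hexp

theorem sub_one_mul_lt_mul_add_one_mul {A X T : ℕ} (hA : 1 ≤ A) (hX : X ≤ T) :
    (A - 1) * X < (T * A + 1) * A :=
  calc (A - 1) * X ≤ A * T := Nat.mul_le_mul (Nat.sub_le A 1) hX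
    _ < (T * A + 1) * A := by nlinarith [Nat.mul_le_mul_left (T * A) hA]

theorem Finite.exists_lt_ncard_fiber_of_mul_lt_card {α β : Type*} [Finite β] (g : α → β)
    {k : ℕ} (h : Nat.card β * k < Nat.card α) : ∃ b, k < {a | g a = b}.ncard := by
  classical
  have : Finite α := Nat.finite_of_card_ne_zero (by omega)
  have := Fintype.ofFinite α
  have := Fintype.ofFinite β
  rw [Nat.card_eq_fintype_card, Nat.card_eq_fintype_card] at h
  obtain ⟨b, hb⟩ := Fintype.exists_lt_card_fiber_of_mul_lt_card g h
  exact ⟨b, by rwa [Set.ncard_eq_toFinset_card', Set.toFinset_ofPred]⟩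

section Box

variable (a b : ℕ)

theorem Nat.card_subtype_fst_lt_and_snd_le :
    Nat.card {p : ℕ × ℕ // p.1 < a ∧ p.2 ≤ b} = a * (b + 1) := by
  change Nat.card (Set.Iio a ×ˢ Set.Iic b) = _
  rw [Nat.card_coe_set_eq, Set.ncard_prod, Set.ncard_Iio_nat, Set.ncard_Iic_nat]

instance : Finite {p : ℕ × ℕ // p.1 < a ∧ p.2 ≤ b} :=
  ((Set.finite_Iio a).prod (Set.finite_Iic b)).to_subtype

end Box

section Vertices

variable (f : ℕ → ℕ) (n : ℕ)

theorem card_XVert : Nat.card (XVert f n) = f n * (2 ^ 2 ^ (2 * n) * f n + 1) :=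
  Nat.card_subtype_fst_lt_and_snd_le _ _

theorem card_YVert : Nat.card (YVert f n) = f n * (2 ^ 2 ^ (2 * n + 1) * f n + 1) :=
  Nat.card_subtype_fst_lt_and_snd_le _ _

instance : Finite (YVert f n) :=
  inferInstanceAs (Finite {p : ℕ × ℕ // p.1 < f n ∧ p.2 ≤ 2 ^ 2 ^ (2 * n + 1) * f n})

end Vertices

theorem statement6_general
    (f : ℕ → ℕ)
    (hf1 : f 1 = 1)
    (hf : ∀ n, 2 ≤ n → 2 ≤ f n ∧ f n ≤ n)
    (m n : ℕ) (hm : 1 ≤ m) (hmn : m < n) (hn : 2 ≤ f n) :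
    (f n - 1) * ((2 ^ 2 ^ (2 * m + 1) * f m + 1) * f m) <
        (2 ^ 2 ^ (2 * n) * f n + 1) * f n ∧
      (∀ g : Wiring (Xgraph f n) (Ygraph f m),
        ∃ w : YVert f m, f n ≤ {v : XVert f n | g.toFun v = w}.ncard) ∧
      (∀ g : Wiring (Xgraph f n) (Ygraph f m), ¬ g.IsCoarse (f n - 1)) := by
  have hfm : f m ≤ m := by
    rcases hm.eq_or_lt with rfl | hm2
    · exact hf1.le
    · exact (hf m hm2).2
  have hverts := sub_one_mul_lt_mul_add_one_mul (by omega : 1 ≤ f n)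
    (two_pow_two_pow_mul_add_one_mul_le hmn hfm)
  have hfiber : ∀ g : Wiring (Xgraph f n) (Ygraph f m),
      ∃ w : YVert f m, f n ≤ {v : XVert f n | g.toFun v = w}.ncard := by
    intro g
    have hcard : Nat.card (YVert f m) * (f n - 1) < Nat.card (XVert f n) := by
      rw [card_YVert, card_XVert]
      linarith
    obtain ⟨w, hw⟩ := Finite.exists_lt_ncard_fiber_of_mul_lt_card g.toFun hcard
    exact ⟨w, by omega⟩
  refine ⟨hverts, hfiber, fun g hg => ?_⟩
  obtain ⟨w, hw⟩ := hfiber g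
  exact absurd (hg.1 w) (by omega)

/-- For `1 ≤ m < n` with `f n ≥ 2`, the number of vertices of `X_n`
exceeds `(f n - 1)` times the number of vertices of `Y_m`; hence for every wiring `g`
of `X_n` into `Y_m` some vertex of `Y_m` has at least `f n` preimages, so `X_n` admits
no coarse `(f n - 1)`-wiring into `Y_m`. -/
theorem statement6
    (f : ℕ → ℕ)
    (hsurj : ∀ k, 1 ≤ k → ∃ n, 1 ≤ n ∧ f n = k)
    (hf1 : f 1 = 1)
    (hf : ∀ n, 2 ≤ n → 2 ≤ f n ∧ f n ≤ n)
    (hinf : ∀ k, 2 ≤ k → {n | f n = k}.Infinite)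
    (m n : ℕ) (hm : 1 ≤ m) (hmn : m < n) (hn : 2 ≤ f n) :
    (f n - 1) * ((2 ^ 2 ^ (2 * m + 1) * f m + 1) * f m) <
        (2 ^ 2 ^ (2 * n) * f n + 1) * f n ∧
      (∀ g : Wiring (Xgraph f n) (Ygraph f m),
        ∃ w : YVert f m, f n ≤ {v : XVert f n | g.toFun v = w}.ncard) ∧
      (∀ g : Wiring (Xgraph f n) (Ygraph f m), ¬ g.IsCoarse (f n - 1)) :=
  statement6_general f hf1 hf m n hm hmn hn
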